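/- Representer theorem (closed-span case): Suppose the subspace H_{K,x} spanned by the kernel sections at the input points x₁,…,x_{l+u} is closed in H_K. If the minimisation problem f_{z,γ} = argmin_{f ∈ H_K} I(f), with I(f) = (1/l) Σ_{j=1}^l V_{x_j}(y_j, C_{x_j} f(x_j)) + γ_A ‖f‖² + γ_I ⟨f̄, M f̄⟩ and γ_A > 0, has a solution, then every solution has the form f_{z,γ} = Σ_{j=1}^{l+u} K_{x_j} a_j for some a_j ∈ W_{x_j}. -/

import Mathlib

open scoped RealInnerProductSpace

/-! Let `P` be the orthogonal projection onto the closed span `S` of the kernel sections. Since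
every `K_{x_i}` maps into `S`, the evaluations `K_{x_i}* f` only see the component of `f` in `S`,
so `I(f) - I(Pf) = γ_A (‖f‖² - ‖Pf‖²)`. A minimiser therefore satisfies `‖f‖ ≤ ‖Pf‖`, which
forces `f = Pf ∈ S`. -/

variable {l u : ℕ}

/-- The regularised learning functional
`I(f) = (1/l) Σ_j V_j(y_j, C_j f(x_j)) + γ_A ‖f‖² + γ_I ⟨f̄, M f̄⟩`, where the
evaluation at the input point `x_i` is `f(x_i) = K_{x_i}* f` and
`f̄ = (f(x_1),…,f(x_{l+u}))`. -/
noncomputable def lossI {HK : Type} [NormedAddCommGroup HK] [InnerProductSpace ℝ HK]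
    [CompleteSpace HK]
    (Wb : Fin (l + u) → Type) [∀ i, NormedAddCommGroup (Wb i)]
    [∀ i, InnerProductSpace ℝ (Wb i)] [∀ i, CompleteSpace (Wb i)]
    (Yb : Fin l → Type) [∀ j, NormedAddCommGroup (Yb j)] [∀ j, InnerProductSpace ℝ (Yb j)]
    (Kx : ∀ i, Wb i →L[ℝ] HK)
    (C : ∀ j : Fin l, Wb (Fin.castAdd u j) →L[ℝ] Yb j)
    (y : ∀ j : Fin l, Yb j)
    (V : ∀ j : Fin l, Yb j → Yb j → ℝ)
    (M : PiLp 2 Wb →L[ℝ] PiLp 2 Wb)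
    (γA γI : ℝ) (f : HK) : ℝ :=
  (1 / (l : ℝ)) * ∑ j : Fin l, V j (y j) (C j ((Kx (Fin.castAdd u j)).adjoint f))
    + γA * ‖f‖ ^ 2
    + γI * ⟪(WithLp.equiv 2 (∀ i, Wb i)).symm (fun i => (Kx i).adjoint f),
        M ((WithLp.equiv 2 (∀ i, Wb i)).symm (fun i => (Kx i).adjoint f))⟫

theorem Submodule.mem_span_iUnion_range_iff {R M ι : Type*} [Semiring R] [AddCommMonoid M]
    [Module R M] [Fintype ι] {W : ι → Type*} [∀ i, AddCommMonoid (W i)] [∀ i, Module R (W i)]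
    (T : ∀ i, W i →ₗ[R] M) (x : M) :
    x ∈ span R (⋃ i, Set.range (T i)) ↔ ∃ a : ∀ i, W i, x = ∑ i, T i (a i) := by
  classical
  have hrange : ∀ i, span R (Set.range (T i)) = LinearMap.range (T i) := fun i => by
    rw [← LinearMap.coe_range, span_eq]
  have hsum := mem_iSup_finset_iff_exists_sum (s := Finset.univ) (fun i => LinearMap.range (T i)) x
  simp only [Finset.mem_univ, iSup_pos] at hsum
  rw [span_iUnion]
  simp only [hrange, hsum]
  constructor
  · rintro ⟨μ, rfl⟩
    choose a ha using fun i => (μ i).2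
    exact ⟨a, by simp only [ha]⟩
  · rintro ⟨a, rfl⟩
    exact ⟨fun i => ⟨T i (a i), LinearMap.mem_range_self _ _⟩, rfl⟩

theorem ContinuousLinearMap.adjoint_starProjection_of_range_le {𝕜 E F : Type*} [RCLike 𝕜]
    [NormedAddCommGroup E] [InnerProductSpace 𝕜 E] [CompleteSpace E]
    [NormedAddCommGroup F] [InnerProductSpace 𝕜 F] [CompleteSpace F]
    (T : E →L[𝕜] F) {K : Submodule 𝕜 F} [K.HasOrthogonalProjection] (hT : T.range ≤ K)
    (f : F) : T.adjoint (K.starProjection f) = T.adjoint f := by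
  have hker : f - K.starProjection f ∈ T.adjoint.ker := by
    rw [← T.orthogonal_range]
    exact Submodule.orthogonal_le hT (K.sub_starProjection_mem_orthogonal f)
  rw [LinearMap.mem_ker, map_sub, sub_eq_zero] at hker
  exact hker.symm

section lossI

variable {HK : Type} [NormedAddCommGroup HK] [InnerProductSpace ℝ HK] [CompleteSpace HK]
    {Wb : Fin (l + u) → Type} [∀ i, NormedAddCommGroup (Wb i)]
    [∀ i, InnerProductSpace ℝ (Wb i)] [∀ i, CompleteSpace (Wb i)]
    {Yb : Fin l → Type} [∀ j, NormedAddCommGroup (Yb j)] [∀ j, InnerProductSpace ℝ (Yb j)]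
    {Kx : ∀ i, Wb i →L[ℝ] HK} {C : ∀ j : Fin l, Wb (Fin.castAdd u j) →L[ℝ] Yb j}
    {y : ∀ j : Fin l, Yb j} {V : ∀ j : Fin l, Yb j → Yb j → ℝ} {M : PiLp 2 Wb →L[ℝ] PiLp 2 Wb}
    {γA γI : ℝ}

theorem lossI_sub_lossI_of_adjoint_eq {f g : HK} (h : ∀ i, (Kx i).adjoint g = (Kx i).adjoint f) :
    lossI Wb Yb Kx C y V M γA γI f - lossI Wb Yb Kx C y V M γA γI g
      = γA * (‖f‖ ^ 2 - ‖g‖ ^ 2) := by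
  simp only [lossI, h]
  ring

theorem lossI_sub_lossI_starProjection (K : Submodule ℝ HK) [K.HasOrthogonalProjection]
    (hK : ∀ i, (Kx i).range ≤ K) (f : HK) :
    lossI Wb Yb Kx C y V M γA γI f - lossI Wb Yb Kx C y V M γA γI (K.starProjection f)
      = γA * (‖f‖ ^ 2 - ‖K.starProjection f‖ ^ 2) :=
  lossI_sub_lossI_of_adjoint_eq fun i => (Kx i).adjoint_starProjection_of_range_le (hK i) f

end lossI

theorem representer_closed_span_general {HK : Type} [NormedAddCommGroup HK]
    [InnerProductSpace ℝ HK] [CompleteSpace HK]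
    (Wb : Fin (l + u) → Type) [∀ i, NormedAddCommGroup (Wb i)]
    [∀ i, InnerProductSpace ℝ (Wb i)] [∀ i, CompleteSpace (Wb i)]
    (Yb : Fin l → Type) [∀ j, NormedAddCommGroup (Yb j)] [∀ j, InnerProductSpace ℝ (Yb j)]
    (Kx : ∀ i, Wb i →L[ℝ] HK)
    (C : ∀ j : Fin l, Wb (Fin.castAdd u j) →L[ℝ] Yb j)
    (y : ∀ j : Fin l, Yb j)
    (V : ∀ j : Fin l, Yb j → Yb j → ℝ)
    (M : PiLp 2 Wb →L[ℝ] PiLp 2 Wb)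
    (γA γI : ℝ) (hγA : 0 < γA)
    (hclosed : IsClosed ((Submodule.span ℝ (⋃ i, Set.range (Kx i)) : Submodule ℝ HK) : Set HK))
    (fzγ : HK) (hmin : ∀ g : HK, lossI Wb Yb Kx C y V M γA γI fzγ ≤ lossI Wb Yb Kx C y V M γA γI g) :
    ∃ a : ∀ i, Wb i, fzγ = ∑ i, Kx i (a i) := by
  set S : Submodule ℝ HK := Submodule.span ℝ (⋃ i, Set.range (Kx i))
  have : CompleteSpace S := hclosed.completeSpace_coe
  have hrange : ∀ i, (Kx i).range ≤ S := by
    rintro i _ ⟨w, rfl⟩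
    exact Submodule.subset_span (Set.mem_iUnion_of_mem i ⟨w, rfl⟩)
  have hnorm_le : ‖fzγ‖ ≤ ‖S.starProjection fzγ‖ := by
    have hle := hmin (S.starProjection fzγ)
    rw [← sub_nonpos, lossI_sub_lossI_starProjection S hrange] at hle
    have hsq : ‖fzγ‖ ^ 2 ≤ ‖S.starProjection fzγ‖ ^ 2 :=
      sub_nonpos.mp (nonpos_of_mul_nonpos_right hle hγA)
    exact (pow_le_pow_iff_left₀ (norm_nonneg _) (norm_nonneg _) two_ne_zero).mp hsq
  have hmem : fzγ ∈ S := (S.mem_iff_norm_starProjection fzγ).mpr <|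
    le_antisymm (S.norm_starProjection_apply_le fzγ) hnorm_le
  exact (Submodule.mem_span_iUnion_range_iff (fun i => (Kx i : Wb i →ₗ[ℝ] HK)) fzγ).mp hmem

/-- Representer theorem (closed-span case): if the span of the kernel sections at the
input points is closed and the minimisation problem has a solution, then every solution
is a linear combination of kernel sections. -/
theorem representer_closed_span {HK : Type} [NormedAddCommGroup HK]
    [InnerProductSpace ℝ HK] [CompleteSpace HK]
    (Wb : Fin (l + u) → Type) [∀ i, NormedAddCommGroup (Wb i)]
    [∀ i, InnerProductSpace ℝ (Wb i)] [∀ i, CompleteSpace (Wb i)]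
    (Yb : Fin l → Type) [∀ j, NormedAddCommGroup (Yb j)] [∀ j, InnerProductSpace ℝ (Yb j)]
    (Kx : ∀ i, Wb i →L[ℝ] HK)
    (C : ∀ j : Fin l, Wb (Fin.castAdd u j) →L[ℝ] Yb j)
    (y : ∀ j : Fin l, Yb j)
    (V : ∀ j : Fin l, Yb j → Yb j → ℝ)
    (M : PiLp 2 Wb →L[ℝ] PiLp 2 Wb)
    (hM : ∀ v w : PiLp 2 Wb, ⟪M v, w⟫ = ⟪v, M w⟫) (hMpos : ∀ w : PiLp 2 Wb, 0 ≤ ⟪w, M w⟫)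
    (γA γI : ℝ) (hγA : 0 < γA) (hγI : 0 ≤ γI)
    (hclosed : IsClosed ((Submodule.span ℝ (⋃ i, Set.range (Kx i)) : Submodule ℝ HK) : Set HK))
    (fzγ : HK) (hmin : ∀ g : HK, lossI Wb Yb Kx C y V M γA γI fzγ ≤ lossI Wb Yb Kx C y V M γA γI g) :
    ∃ a : ∀ i, Wb i, fzγ = ∑ i, Kx i (a i) :=
  representer_closed_span_general Wb Yb Kx C y V M γA γI hγA hclosed fzγ hmin
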